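/- arXiv:1312.4155 — 2 statements merged into one kernel-verified Lean document; each statement's English description precedes it below -/
import Mathlib

section
/- Consider the controllable system ẋ = Ax + Bu on ℝⁿ in Brunovsky normal form: A = ⊕ᵢ Aᵢ and B = ⊕ᵢ Bᵢ, where each Aᵢ is the nᵢ×nᵢ nilpotent shift matrix (ones on the superdiagonal, zeros elsewhere) and each Bᵢ = (0, …, 0, 1)ᵀ ∈ ℝ^{nᵢ}, with controls u in a fixed centrally symmetric convex body U ⊂ ℝᵐ. Let δ(T) = ⊕ᵢ δᵢ(T) with δᵢ(T) = diag(T^{−nᵢ}, T^{−nᵢ+1}, …, T^{−1}). Then δ(T)·A·δ(T)⁻¹ = T⁻¹A and δ(T)·B = T⁻¹B, and consequently δ(T)·D(T) = D(1) for all T > 0, so the shapes Sh D(T) of the reachable sets do not depend on T. -/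
open MeasureTheory Matrix Set Filter Topology Pointwise

/-- Support function of a set with respect to the dot product. -/
noncomputable def suppFn {ι : Type*} [Fintype ι] (Ω : Set (ι → ℝ)) (ξ : ι → ℝ) : ℝ :=
  sSup ((fun x => x ⬝ᵥ ξ) '' Ω)

/-- A centrally symmetric convex body: compact, convex, nonempty interior, `Ω = -Ω`. -/
def IsSymConvexBody {ι : Type*} [Fintype ι] (Ω : Set (ι → ℝ)) : Prop :=
  IsCompact Ω ∧ Convex ℝ Ω ∧ (interior Ω).Nonempty ∧ Ω = -Ω

/-- `t(Ω₁, Ω₂) = inf { t ≥ 1 : tΩ₁ ⊇ Ω₂ }`. -/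
noncomputable def bmFactor {ι : Type*} [Fintype ι] (Ω₁ Ω₂ : Set (ι → ℝ)) : ℝ :=
  sInf {t : ℝ | 1 ≤ t ∧ Ω₂ ⊆ t • Ω₁}

/-- The Banach–Mazur distance `ρ(Ω₁, Ω₂) = log (t(Ω₁,Ω₂) · t(Ω₂,Ω₁))`. -/
noncomputable def bmDist {ι : Type*} [Fintype ι] (Ω₁ Ω₂ : Set (ι → ℝ)) : ℝ :=
  Real.log (bmFactor Ω₁ Ω₂ * bmFactor Ω₂ Ω₁)

/-- Distance between shapes: `ρ(Sh Ω₁, Sh Ω₂) = inf over invertible g of ρ(g Ω₁, Ω₂)`. -/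
noncomputable def shapeDist {ι : Type*} [Fintype ι] [DecidableEq ι] (Ω₁ Ω₂ : Set (ι → ℝ)) : ℝ :=
  sInf {r : ℝ | ∃ g : Matrix ι ι ℝ, IsUnit g ∧ r = bmDist (g.mulVec '' Ω₁) Ω₂}

/-- The shape of a set: its orbit under the action of invertible matrices. -/
def shapeOrbit {ι : Type*} [Fintype ι] [DecidableEq ι] (Ω : Set (ι → ℝ)) :
    Set (Set (ι → ℝ)) :=
  {S | ∃ g : Matrix ι ι ℝ, IsUnit g ∧ S = g.mulVec '' Ω}

/-- Reachable set at time `T` from the origin of `ẋ = Ax + Bu`, `u(s) ∈ U`. -/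
noncomputable def reachable {ι κ : Type*} [Fintype ι] [DecidableEq ι] [Fintype κ]
    (A : Matrix ι ι ℝ) (B : Matrix ι κ ℝ) (U : Set (κ → ℝ)) (T : ℝ) : Set (ι → ℝ) :=
  { x | ∃ u : ℝ → κ → ℝ, Measurable u ∧ (∀ s, u s ∈ U) ∧
      x = ∫ s in (0:ℝ)..T, (NormedSpace.exp ((T - s) • A)) *ᵥ (B *ᵥ u s) }

/-- The Kalman controllability condition: the columns of `B, AB, …, A^{n-1}B` span `ℝⁿ`. -/
def Kalman {n m : ℕ} (A : Matrix (Fin n) (Fin n) ℝ) (B : Matrix (Fin n) (Fin m) ℝ) : Prop :=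
  Submodule.span ℝ (⋃ k ∈ Finset.range n, Set.range (A ^ k * B).mulVec) = ⊤

/-- The `A`-matrix of a system in Brunovsky normal form: a direct sum of nilpotent shift
blocks of sizes `ns i`, indexed by `(i : Fin r) × Fin (ns i)`. -/
def brunovskyBlockA {r : ℕ} (ns : Fin r → ℕ) :
    Matrix ((i : Fin r) × Fin (ns i)) ((i : Fin r) × Fin (ns i)) ℝ :=
  Matrix.of fun p q => if p.1 = q.1 ∧ (p.2 : ℕ) + 1 = (q.2 : ℕ) then 1 else 0

/-- The `B`-matrix of a system in Brunovsky normal form: a direct sum of the columns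
`(0, …, 0, 1)ᵀ`, one for each block. -/
def brunovskyBlockB {r : ℕ} (ns : Fin r → ℕ) :
    Matrix ((i : Fin r) × Fin (ns i)) (Fin r) ℝ :=
  Matrix.of fun p j => if p.1 = j ∧ (p.2 : ℕ) = ns p.1 - 1 then 1 else 0

/-- The normalizing matrix `δ(T) = ⊕ᵢ diag(T^{-nᵢ}, …, T^{-1})`. -/
noncomputable def brunovskyDelta {r : ℕ} (ns : Fin r → ℕ) (T : ℝ) :
    Matrix ((i : Fin r) × Fin (ns i)) ((i : Fin r) × Fin (ns i)) ℝ :=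
  Matrix.diagonal fun p => T ^ ((p.2 : ℤ) - (ns p.1 : ℤ))

/-!
If `P A P⁻¹ = T⁻¹ A` and `P B = T⁻¹ B`, then `P exp((T - s)A) B = T⁻¹ exp((1 - s/T)A) B`, so the
substitution `s = T t` turns the endpoint at time `T` of a control `u` into the endpoint at time `1`
of the control `u(T ·)`, after applying `P`. The matrix `δ(T)` is such a `P`, and `D(T)`, `D(1)`
then lie in one `GL`-orbit.
-/

theorem ContinuousLinearEquiv.intervalIntegral_comp_comm {E F : Type*} [NormedAddCommGroup E]
    [NormedSpace ℝ E] [NormedAddCommGroup F] [NormedSpace ℝ F] (L : E ≃L[ℝ] F) (f : ℝ → E)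
    (a b : ℝ) : ∫ x in a..b, L (f x) = L (∫ x in a..b, f x) := by
  simp only [intervalIntegral, L.integral_comp_comm, map_sub]

namespace Matrix

variable {ι : Type*} [Fintype ι] [DecidableEq ι]

-- Invertibility of `P` makes this hold even when `f` is not integrable: both sides are then `0`.
theorem mulVec_intervalIntegral {P : Matrix ι ι ℝ} (hP : IsUnit P) (f : ℝ → ι → ℝ) (a b : ℝ) :
    P *ᵥ ∫ x in a..b, f x = ∫ x in a..b, P *ᵥ f x := by
  have := hP.invertible
  exact ((P.toLinearEquiv' this).toContinuousLinearEquiv.intervalIntegral_comp_comm f a b).symm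

theorem mul_exp_smul_of_conj_eq_smul {P A : Matrix ι ι ℝ} {c : ℝ} (hP : IsUnit P)
    (hA : P * A * P⁻¹ = c • A) (x : ℝ) :
    P * NormedSpace.exp (x • A) = NormedSpace.exp ((c * x) • A) * P := by
  have hconj : (c * x) • A = P * (x • A) * P⁻¹ := by
    rw [mul_smul_comm, smul_mul_assoc, hA, smul_smul, mul_comm x c]
  rw [hconj, exp_conj _ _ hP, nonsing_inv_mul_cancel_right _ _ ((isUnit_iff_isUnit_det P).1 hP)]

end Matrix

open Matrix

section Reachable

variable {ι κ : Type*} [Fintype ι] [DecidableEq ι] [Fintype κ]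

theorem mulVec_reachable_integral_eq {A P : Matrix ι ι ℝ} {B : Matrix ι κ ℝ} {T : ℝ}
    (hT : T ≠ 0) (hP : IsUnit P) (hA : P * A * P⁻¹ = T⁻¹ • A) (hB : P * B = T⁻¹ • B)
    (u : ℝ → κ → ℝ) :
    P *ᵥ ∫ s in (0:ℝ)..T, NormedSpace.exp ((T - s) • A) *ᵥ (B *ᵥ u s) =
      ∫ t in (0:ℝ)..1, NormedSpace.exp ((1 - t) • A) *ᵥ (B *ᵥ u (T * t)) := by
  have hpt : ∀ t, P *ᵥ (NormedSpace.exp ((T - T * t) • A) *ᵥ (B *ᵥ u (T * t))) =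
      T⁻¹ • (NormedSpace.exp ((1 - t) • A) *ᵥ (B *ᵥ u (T * t))) := by
    intro t
    rw [mulVec_mulVec, mul_exp_smul_of_conj_eq_smul hP hA, ← mulVec_mulVec, mulVec_mulVec _ P,
      hB, smul_mulVec, mulVec_smul]
    congr 4
    field_simp
  have hsubst := intervalIntegral.smul_integral_comp_mul_left (a := 0) (b := 1)
    (fun s => P *ᵥ (NormedSpace.exp ((T - s) • A) *ᵥ (B *ᵥ u s))) T
  rw [mul_zero, mul_one] at hsubst
  rw [mulVec_intervalIntegral hP, ← hsubst]
  simp only [hpt, intervalIntegral.integral_smul, smul_smul, mul_inv_cancel₀ hT, one_smul]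

theorem image_reachable_eq_of_conj_eq_smul {A P : Matrix ι ι ℝ} {B : Matrix ι κ ℝ} {T : ℝ}
    (U : Set (κ → ℝ)) (hT : T ≠ 0) (hP : IsUnit P) (hA : P * A * P⁻¹ = T⁻¹ • A)
    (hB : P * B = T⁻¹ • B) : P.mulVec '' reachable A B U T = reachable A B U 1 := by
  ext x
  constructor
  · rintro ⟨y, ⟨u, hu, huU, rfl⟩, rfl⟩
    exact ⟨fun t => u (T * t), hu.comp (measurable_const_mul T), fun t => huU _,
      mulVec_reachable_integral_eq hT hP hA hB u⟩
  · rintro ⟨v, hv, hvU, rfl⟩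
    refine ⟨_, ⟨fun s => v (T⁻¹ * s), hv.comp (measurable_const_mul T⁻¹), fun s => hvU _, rfl⟩,
      ?_⟩
    simp only [mulVec_reachable_integral_eq hT hP hA hB, inv_mul_cancel_left₀ hT]

end Reachable

theorem shapeOrbit_image_mulVec {ι : Type*} [Fintype ι] [DecidableEq ι] {g : Matrix ι ι ℝ}
    (hg : IsUnit g) (Ω : Set (ι → ℝ)) : shapeOrbit (g.mulVec '' Ω) = shapeOrbit Ω := by
  ext S
  constructor
  · rintro ⟨h, hh, rfl⟩
    exact ⟨h * g, hh.mul hg, by simp only [image_image, mulVec_mulVec]⟩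
  · rintro ⟨h, hh, rfl⟩
    refine ⟨h * g⁻¹, hh.mul (isUnit_nonsing_inv_iff.2 hg), ?_⟩
    simp only [image_image, mulVec_mulVec, mul_assoc,
      nonsing_inv_mul _ ((isUnit_iff_isUnit_det g).1 hg), mul_one]

section Brunovsky

variable {r : ℕ} (ns : Fin r → ℕ) {T : ℝ}

theorem isUnit_brunovskyDelta (hT : T ≠ 0) : IsUnit (brunovskyDelta ns T) := by
  rw [isUnit_iff_isUnit_det, brunovskyDelta, det_diagonal, isUnit_iff_ne_zero]
  exact Finset.prod_ne_zero_iff.2 fun p _ => zpow_ne_zero _ hT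

theorem brunovskyDelta_mul_blockA (hT : T ≠ 0) :
    brunovskyDelta ns T * brunovskyBlockA ns =
      T⁻¹ • (brunovskyBlockA ns * brunovskyDelta ns T) := by
  ext p q
  simp only [brunovskyDelta, brunovskyBlockA, diagonal_mul, mul_diagonal, Matrix.smul_apply,
    of_apply, smul_eq_mul]
  split_ifs with h
  · obtain ⟨hpq, hsucc⟩ := h
    have he : (q.2 : ℤ) - ns q.1 = ((p.2 : ℤ) - ns p.1) + 1 := by
      have := congrArg ns hpq
      omega
    rw [he, zpow_add_one₀ hT]
    field_simp
  · simp

theorem brunovskyDelta_conj_blockA (hT : T ≠ 0) :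
    brunovskyDelta ns T * brunovskyBlockA ns * (brunovskyDelta ns T)⁻¹ =
      T⁻¹ • brunovskyBlockA ns := by
  rw [brunovskyDelta_mul_blockA ns hT, smul_mul, mul_assoc,
    mul_nonsing_inv _ ((isUnit_iff_isUnit_det _).1 (isUnit_brunovskyDelta ns hT)), mul_one]

theorem brunovskyDelta_mul_blockB (T : ℝ) :
    brunovskyDelta ns T * brunovskyBlockB ns = T⁻¹ • brunovskyBlockB ns := by
  ext p j
  simp only [brunovskyDelta, brunovskyBlockB, diagonal_mul, Matrix.smul_apply, of_apply,
    smul_eq_mul]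
  split_ifs with h
  -- `p.2 : Fin (ns p.1)` forces `1 ≤ ns p.1`, so the truncated `ns p.1 - 1` is the honest one.
  · have he : (p.2 : ℤ) - ns p.1 = -1 := by have := p.2.isLt; omega
    rw [he, _root_.zpow_neg_one]
  · simp

end Brunovsky

theorem brunovsky_normal_form_selfsimilar_general {r : ℕ} (ns : Fin r → ℕ)
    (U : Set (Fin r → ℝ)) (T : ℝ) (hT : 0 < T) :
    brunovskyDelta ns T * brunovskyBlockA ns * (brunovskyDelta ns T)⁻¹ =
        T⁻¹ • brunovskyBlockA ns ∧
    brunovskyDelta ns T * brunovskyBlockB ns = T⁻¹ • brunovskyBlockB ns ∧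
    (brunovskyDelta ns T).mulVec '' reachable (brunovskyBlockA ns) (brunovskyBlockB ns) U T =
        reachable (brunovskyBlockA ns) (brunovskyBlockB ns) U 1 ∧
    shapeOrbit (reachable (brunovskyBlockA ns) (brunovskyBlockB ns) U T) =
        shapeOrbit (reachable (brunovskyBlockA ns) (brunovskyBlockB ns) U 1) := by
  have hδ := isUnit_brunovskyDelta ns hT.ne'
  have hA := brunovskyDelta_conj_blockA ns hT.ne'
  have hB := brunovskyDelta_mul_blockB ns T
  have hD := image_reachable_eq_of_conj_eq_smul U hT.ne' hδ hA hB
  exact ⟨hA, hB, hD, by rw [← hD, shapeOrbit_image_mulVec hδ]⟩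

/-- **Self-similarity of the reachable sets of a system in Brunovsky normal form.**
For `A = ⊕ᵢ Aᵢ`, `B = ⊕ᵢ Bᵢ` in Brunovsky form and `δ(T) = ⊕ᵢ δᵢ(T)` with
`δᵢ(T) = diag(T^{-nᵢ}, …, T^{-1})` one has `δ(T)·A·δ(T)⁻¹ = T⁻¹A`, `δ(T)·B = T⁻¹B`,
and consequently `δ(T)·D(T) = D(1)` for all `T > 0`, so the shapes `Sh D(T)` of the
reachable sets do not depend on `T`. -/
theorem brunovsky_normal_form_selfsimilar {r : ℕ} (ns : Fin r → ℕ) (hns : ∀ i, 0 < ns i)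
    (U : Set (Fin r → ℝ)) (hU : IsSymConvexBody U) (T : ℝ) (hT : 0 < T) :
    brunovskyDelta ns T * brunovskyBlockA ns * (brunovskyDelta ns T)⁻¹ =
        T⁻¹ • brunovskyBlockA ns ∧
    brunovskyDelta ns T * brunovskyBlockB ns = T⁻¹ • brunovskyBlockB ns ∧
    (brunovskyDelta ns T).mulVec '' reachable (brunovskyBlockA ns) (brunovskyBlockB ns) U T =
        reachable (brunovskyBlockA ns) (brunovskyBlockB ns) U 1 ∧
    shapeOrbit (reachable (brunovskyBlockA ns) (brunovskyBlockB ns) U T) =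
        shapeOrbit (reachable (brunovskyBlockA ns) (brunovskyBlockB ns) U 1) :=
  brunovsky_normal_form_selfsimilar_general ns U T hT
end

section
/- Let ẋ = Ax + Bu and ẋ̃ = Ax̃ + B(u + Cx̃) be a linear system and its modification by the feedback Cx̃, where C is an m×n matrix, with controls u taking values in a centrally symmetric convex body U ⊂ ℝᵐ. Then there exist constants c > 0, T₀ > 0 such that for all 0 < T ≤ T₀ the reachable sets satisfy D̃(T) ⊆ (1 + cT)·D(T), where D(T) and D̃(T) are the reachable sets from the origin of the original and the feedback system respectively. (The bound arises because along any trajectory x̃ of the feedback system with x̃(0) = 0 one has Cx̃(t) = O(t) uniformly, so u(t) + Cx̃(t) ∈ (1 + cT)U for t ≤ T.) -/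
/-!
Let `x̃` be the feedback trajectory driven by an admissible control `u`, and `M = A + BC`.
Variation of constants (Fubini on the triangle `0 ≤ s ≤ σ ≤ T`, together with
`d/dσ [e^{(T-σ)A} e^{(σ-s)M}] = e^{(T-σ)A} (M - A) e^{(σ-s)M}`) shows that `x̃(T)` is also the
endpoint of the original system driven by `u + Cx̃`. Since `x̃(t) = O(t)` uniformly in `u` and
the symmetric convex body `U` contains a ball `B(0, r)`, convexity gives
`u + Cx̃ ∈ U + cT·B(0, r) ⊆ (1 + cT)U` on `[0, T]`, so `(1 + cT)⁻¹(u + Cx̃)` is admissible.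
-/

open MeasureTheory Matrix Set Filter Topology Pointwise

open NormedSpace intervalIntegral

lemma exists_closedBall_subset_of_neg_eq {E : Type*} [NormedAddCommGroup E] [NormedSpace ℝ E]
    {U : Set E} (hconv : Convex ℝ U) (hsymm : U = -U) (hint : (interior U).Nonempty) :
    ∃ r > 0, Metric.closedBall 0 r ⊆ U := by
  obtain ⟨x, hx⟩ := hint
  have hnegx : -x ∈ U := by
    rw [hsymm, Set.neg_mem_neg]
    exact interior_subset hx
  have h0 : (0 : E) ∈ interior U := by
    simpa using hconv.combo_interior_self_mem_interior hx hnegx one_half_pos one_half_pos.le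
      (add_halves 1)
  exact Metric.nhds_basis_closedBall.mem_iff.mp (mem_interior_iff_mem_nhds.mp h0)

lemma add_mem_one_add_smul_of_norm_le {E : Type*} [NormedAddCommGroup E] [NormedSpace ℝ E]
    {U : Set E} (hconv : Convex ℝ U) {r : ℝ} (hr : 0 ≤ r) (hball : Metric.closedBall 0 r ⊆ U)
    {ε : ℝ} (hε : 0 ≤ ε) {u w : E} (hu : u ∈ U) (hw : ‖w‖ ≤ ε * r) :
    u + w ∈ (1 + ε) • U := by
  rw [hconv.add_smul zero_le_one hε, one_smul]
  refine Set.add_mem_add hu (Set.smul_set_mono hball ?_)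
  rw [smul_closedBall _ _ hr, smul_zero, Real.norm_of_nonneg hε]
  simpa using hw

lemma integral_integral_swap_triangle {E : Type*} [NormedAddCommGroup E] [NormedSpace ℝ E]
    [CompleteSpace E] {g : ℝ → ℝ → E} {a b : ℝ} (hab : a ≤ b)
    (hg : IntegrableOn (Function.uncurry g) (Ioc a b ×ˢ Ioc a b)) :
    ∫ s in a..b, ∫ σ in s..b, g s σ = ∫ σ in a..b, ∫ s in a..σ, g s σ := by
  set μ := volume.restrict (Ioc a b)
  set h : ℝ × ℝ → E := {p | p.1 ≤ p.2}.indicator (Function.uncurry g)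
  have hint : Integrable h (μ.prod μ) := by
    rw [Measure.prod_restrict, ← Measure.volume_eq_prod]
    exact hg.indicator (measurableSet_le measurable_fst measurable_snd)
  have hinner_left : ∀ s ∈ Ioc a b, ∫ σ in s..b, g s σ = ∫ σ, h (s, σ) ∂μ := by
    intro s hs
    have hslice : (fun σ => h (s, σ)) = (Ici s).indicator (g s) := by
      ext σ
      simp [h, Set.indicator_apply]
    have hset : Ici s ∩ Ioc a b = Icc s b := by
      ext σ
      simp only [mem_inter_iff, mem_Ici, mem_Ioc, mem_Icc]
      grind [hs.1]
    rw [hslice, MeasureTheory.integral_indicator measurableSet_Ici,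
      Measure.restrict_restrict measurableSet_Ici, hset, integral_Icc_eq_integral_Ioc,
      integral_of_le hs.2]
  have hinner_right : ∀ σ ∈ Ioc a b, ∫ s in a..σ, g s σ = ∫ s, h (s, σ) ∂μ := by
    intro σ hσ
    have hslice : (fun s => h (s, σ)) = (Iic σ).indicator (fun s => g s σ) := by
      ext s
      simp [h, Set.indicator_apply]
    have hset : Iic σ ∩ Ioc a b = Ioc a σ := by
      ext s
      simp only [mem_inter_iff, mem_Iic, mem_Ioc]
      grind [hσ.2]
    rw [hslice, MeasureTheory.integral_indicator measurableSet_Iic,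
      Measure.restrict_restrict measurableSet_Iic, hset, integral_of_le hσ.1.le]
  rw [integral_of_le hab, integral_of_le hab, setIntegral_congr_fun measurableSet_Ioc hinner_left,
    setIntegral_congr_fun measurableSet_Ioc hinner_right]
  exact integral_integral_swap hint

lemma hasDerivAt_exp_smul_mul_exp_smul {𝔸 : Type*} [NormedRing 𝔸] [NormedAlgebra ℝ 𝔸]
    [CompleteSpace 𝔸] (A M : 𝔸) (s T σ : ℝ) :
    HasDerivAt (fun σ : ℝ => exp ((T - σ) • A) * exp ((σ - s) • M))
      (exp ((T - σ) • A) * (M - A) * exp ((σ - s) • M)) σ := by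
  have hA := (hasDerivAt_exp_smul_const (𝕂 := ℝ) A (T - σ)).scomp σ
    ((hasDerivAt_id σ).const_sub T)
  have hM := (hasDerivAt_exp_smul_const' (𝕂 := ℝ) M (σ - s)).scomp σ
    ((hasDerivAt_id σ).sub_const s)
  simp only [Function.comp_def, neg_smul, one_smul, id] at hA hM
  exact (hA.mul hM).congr_deriv (by noncomm_ring)

variable {ι κ : Type*} [Fintype ι] [Fintype κ]

lemma intervalIntegral_mulVec (M : Matrix κ ι ℝ) {f : ℝ → ι → ℝ}
    {a b : ℝ} (hf : IntervalIntegrable f volume a b) :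
    ∫ s in a..b, M *ᵥ f s = M *ᵥ ∫ s in a..b, f s :=
  (Matrix.mulVecLin M).toContinuousLinearMap.intervalIntegral_comp_comm hf

lemma integrableOn_mulVec_of_isCompact {α : Type*}
    [TopologicalSpace α] [T2Space α] [MeasurableSpace α] [OpensMeasurableSpace α]
    [SecondCountableTopology α] {μ : Measure α} [IsFiniteMeasureOnCompacts μ]
    {Φ : α → Matrix κ ι ℝ} (hΦ : Continuous Φ) {S : Set α} (hS : IsCompact S)
    {K : Set (ι → ℝ)} (hK : IsCompact K) {f : α → ι → ℝ} (hf : Measurable f)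
    (hfK : ∀ a, f a ∈ K) :
    IntegrableOn (fun a => Φ a *ᵥ f a) S μ := by
  have hcont : Continuous fun p : α × (ι → ℝ) => Φ p.1 *ᵥ p.2 := by fun_prop
  obtain ⟨R, hR⟩ := (hS.prod hK).exists_bound_of_continuousOn hcont.continuousOn
  refine Measure.integrableOn_of_bounded hS.measure_lt_top.ne
    (hcont.measurable.comp (measurable_id.prodMk hf)).aestronglyMeasurable (M := R) ?_
  filter_upwards [ae_restrict_mem₀ hS.measurableSet.nullMeasurableSet] with a ha
  exact hR (a, f a) ⟨ha, hfK a⟩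

lemma intervalIntegrable_mulVec_of_isCompact {Φ : ℝ → Matrix κ ι ℝ} (hΦ : Continuous Φ)
    {K : Set (ι → ℝ)} (hK : IsCompact K) {f : ℝ → ι → ℝ} (hf : Measurable f)
    (hfK : ∀ s, f s ∈ K) (a b : ℝ) :
    IntervalIntegrable (fun s => Φ s *ᵥ f s) volume a b :=
  (integrableOn_mulVec_of_isCompact hΦ isCompact_uIcc hK hf hfK).intervalIntegrable

variable [DecidableEq ι]

@[fun_prop]
lemma Matrix.continuous_exp : Continuous (exp : Matrix ι ι ℝ → Matrix ι ι ℝ) := by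
  open scoped Matrix.Norms.Operator in exact exp_continuous

lemma integral_exp_mul_sub_mul_exp_mulVec (A M : Matrix ι ι ℝ) (v : ι → ℝ) (s T : ℝ) :
    ∫ σ in s..T, (exp ((T - σ) • A) * (M - A) * exp ((σ - s) • M)) *ᵥ v =
      exp ((T - s) • M) *ᵥ v - exp ((T - s) • A) *ᵥ v := by
  have hcont : Continuous fun σ : ℝ =>
      (exp ((T - σ) • A) * (M - A) * exp ((σ - s) • M)) *ᵥ v := by
    fun_prop
  -- Matrices carry no global norm: the `L∞` operator norm, installed only here, makes them a
  -- Banach algebra in which `exp` can be differentiated.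
  let _ : NormedRing (Matrix ι ι ℝ) := Matrix.linftyOpNormedRing
  let _ : NormedAlgebra ℝ (Matrix ι ι ℝ) := Matrix.linftyOpNormedAlgebra
  let L : Matrix ι ι ℝ →L[ℝ] ι → ℝ := ((Matrix.mulVecBilin ℝ ℝ).flip v).toContinuousLinearMap
  have hderiv (σ : ℝ) : HasDerivAt (fun σ : ℝ => (exp ((T - σ) • A) * exp ((σ - s) • M)) *ᵥ v)
      ((exp ((T - σ) • A) * (M - A) * exp ((σ - s) • M)) *ᵥ v) σ :=
    L.hasFDerivAt.comp_hasDerivAt σ (hasDerivAt_exp_smul_mul_exp_smul A M s T σ)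
  simpa using integral_eq_sub_of_hasDerivAt (fun σ _ => hderiv σ) (hcont.intervalIntegrable s T)

/-- The solution of `ẋ = M x + f`, `x 0 = 0`, given by the variation of constants formula. -/
noncomputable def mildSolution (M : Matrix ι ι ℝ) (f : ℝ → ι → ℝ) (t : ℝ) : ι → ℝ :=
  ∫ s in (0:ℝ)..t, exp ((t - s) • M) *ᵥ f s

lemma exists_norm_mulVec_mildSolution_le (M : Matrix ι ι ℝ) (C : Matrix κ ι ℝ)
    {K : Set (ι → ℝ)} (hK : IsCompact K) :
    ∃ k > 0, ∀ f : ℝ → ι → ℝ, (∀ s, f s ∈ K) →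
      ∀ t ∈ Icc (0:ℝ) 1, ‖C *ᵥ mildSolution M f t‖ ≤ k * t := by
  have hcont : Continuous fun p : ℝ × (ι → ℝ) => exp (p.1 • M) *ᵥ p.2 := by fun_prop
  obtain ⟨R, hR⟩ := (isCompact_Icc (a := (0:ℝ)) (b := 1)).prod hK
    |>.exists_bound_of_continuousOn hcont.continuousOn
  open scoped Matrix.Norms.Operator in
  refine ⟨‖C‖ * max R 0 + 1, by positivity, fun f hfK t ht => ?_⟩
  have hsol : ‖mildSolution M f t‖ ≤ max R 0 * t := by
    have := norm_integral_le_of_norm_le_const (a := 0) (b := t) (C := max R 0)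
      (f := fun s => exp ((t - s) • M) *ᵥ f s) fun s hs => ?_
    · simpa [mildSolution, abs_of_nonneg ht.1, mul_comm] using this
    rw [uIoc_of_le ht.1] at hs
    exact (hR (t - s, f s) ⟨⟨by linarith [hs.2], by linarith [hs.1, ht.2]⟩, hfK s⟩).trans
      (le_max_left _ _)
  open scoped Matrix.Norms.Operator in
  calc ‖C *ᵥ mildSolution M f t‖ ≤ ‖C‖ * ‖mildSolution M f t‖ := Matrix.linfty_opNorm_mulVec _ _
    _ ≤ ‖C‖ * (max R 0 * t) := by gcongr
    _ ≤ (‖C‖ * max R 0 + 1) * t := by nlinarith [ht.1, norm_nonneg C, le_max_right R 0]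

section
variable {M : Matrix ι ι ℝ} {K : Set (ι → ℝ)} {f : ℝ → ι → ℝ}

lemma mildSolution_eq_exp_mulVec (hK : IsCompact K) (hf : Measurable f) (hfK : ∀ s, f s ∈ K)
    (t : ℝ) : mildSolution M f t = exp (t • M) *ᵥ ∫ s in (0:ℝ)..t, exp ((-s) • M) *ᵥ f s := by
  rw [← intervalIntegral_mulVec _
    (intervalIntegrable_mulVec_of_isCompact (by fun_prop) hK hf hfK _ _)]
  refine integral_congr fun s _ => ?_
  rw [Matrix.mulVec_mulVec,
    ← Matrix.exp_add_of_commute _ _ ((Commute.refl M).smul_left t |>.smul_right _),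
    ← add_smul, sub_eq_add_neg]

lemma continuous_mildSolution (hK : IsCompact K) (hf : Measurable f) (hfK : ∀ s, f s ∈ K) :
    Continuous (mildSolution M f) := by
  simp_rw [funext (mildSolution_eq_exp_mulVec hK hf hfK)]
  exact (by fun_prop : Continuous fun t : ℝ => exp (t • M)).matrix_mulVec
    (continuous_primitive (intervalIntegrable_mulVec_of_isCompact (by fun_prop) hK hf hfK) 0)

lemma mildSolution_eq_mildSolution_add_mulVec (A : Matrix ι ι ℝ) (hK : IsCompact K)
    (hf : Measurable f) (hfK : ∀ s, f s ∈ K) {T : ℝ} (hT : 0 ≤ T) :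
    mildSolution M f T = mildSolution A (fun σ => f σ + (M - A) *ᵥ mildSolution M f σ) T := by
  set x := mildSolution M f
  set g : ℝ → ℝ → ι → ℝ := fun s σ => (exp ((T - σ) • A) * (M - A) * exp ((σ - s) • M)) *ᵥ f s
  have hx : Continuous x := continuous_mildSolution hK hf hfK
  have hforcedA : IntervalIntegrable (fun σ => exp ((T - σ) • A) *ᵥ f σ) volume 0 T :=
    intervalIntegrable_mulVec_of_isCompact (by fun_prop) hK hf hfK 0 T
  have hforcedM : IntervalIntegrable (fun σ => exp ((T - σ) • M) *ᵥ f σ) volume 0 T :=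
    intervalIntegrable_mulVec_of_isCompact (by fun_prop) hK hf hfK 0 T
  have hfeedback_int : IntervalIntegrable (fun σ => exp ((T - σ) • A) *ᵥ ((M - A) *ᵥ x σ))
      volume 0 T := by
    apply Continuous.intervalIntegrable
    fun_prop
  have hslice (σ : ℝ) : exp ((T - σ) • A) *ᵥ ((M - A) *ᵥ x σ) = ∫ s in (0:ℝ)..σ, g s σ := by
    rw [Matrix.mulVec_mulVec, show x σ = mildSolution M f σ from rfl, mildSolution,
      ← intervalIntegral_mulVec _ (intervalIntegrable_mulVec_of_isCompact
        (Φ := fun s => exp ((σ - s) • M)) (by fun_prop) hK hf hfK 0 σ)]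
    simp only [g, Matrix.mulVec_mulVec, Matrix.mul_assoc]
  have hg : IntegrableOn (Function.uncurry g) (Ioc 0 T ×ˢ Ioc 0 T) :=
    (integrableOn_mulVec_of_isCompact
      (Φ := fun p : ℝ × ℝ => exp ((T - p.2) • A) * (M - A) * exp ((p.2 - p.1) • M))
      (by fun_prop) (isCompact_Icc.prod isCompact_Icc) hK (hf.comp measurable_fst)
      (fun p => hfK p.1)).mono_set (prod_mono Ioc_subset_Icc_self Ioc_subset_Icc_self)
  have hfeedback : ∫ σ in (0:ℝ)..T, exp ((T - σ) • A) *ᵥ ((M - A) *ᵥ x σ) =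
      x T - ∫ σ in (0:ℝ)..T, exp ((T - σ) • A) *ᵥ f σ := by
    simp only [hslice]
    rw [← integral_integral_swap_triangle hT hg]
    simp only [g, integral_exp_mul_sub_mul_exp_mulVec]
    rw [integral_sub hforcedM hforcedA]
    rfl
  rw [mildSolution]
  simp only [Matrix.mulVec_add]
  rw [integral_add hforcedA hfeedback_int, hfeedback]
  abel

end

lemma mildSolution_mem_smul_reachable {A : Matrix ι ι ℝ} {B : Matrix ι κ ℝ} {U : Set (κ → ℝ)}
    (hU : U.Nonempty) {t T : ℝ} (ht : t ≠ 0) (hT : 0 ≤ T) {w : ℝ → κ → ℝ} (hw : Measurable w)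
    (hwU : ∀ σ ∈ Icc 0 T, w σ ∈ t • U) :
    mildSolution A (fun σ => B *ᵥ w σ) T ∈ t • reachable A B U T := by
  obtain ⟨u₀, hu₀⟩ := hU
  set v := (Icc 0 T).piecewise (fun σ => t⁻¹ • w σ) fun _ => u₀
  have hvU (σ : ℝ) : v σ ∈ U := by
    by_cases hσ : σ ∈ Icc 0 T
    · simpa [v, hσ] using (Set.mem_smul_set_iff_inv_smul_mem₀ ht _ _).mp (hwU σ hσ)
    · simpa [v, hσ] using hu₀
  have hv : Measurable v :=
    (by fun_prop : Measurable fun σ => t⁻¹ • w σ).piecewise measurableSet_Icc measurable_const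
  have hrescale : mildSolution A (fun σ => B *ᵥ w σ) T =
      t • mildSolution A (fun σ => B *ᵥ v σ) T := by
    rw [mildSolution, mildSolution, ← intervalIntegral.integral_smul]
    refine integral_congr fun σ hσ => ?_
    rw [uIcc_of_le hT] at hσ
    simp [v, hσ, Matrix.mulVec_smul, smul_inv_smul₀ ht]
  rw [hrescale]
  exact Set.smul_mem_smul_set ⟨v, hv, hvU, rfl⟩

/-- **The feedback reachable set is contained in a small dilation of the original one.**
If `D(T)`, `D̃(T)` are the reachable sets of `ẋ = Ax + Bu` and of the feedback system
`ẋ = (A + BC)x + Bu` (`u ∈ U`, a centrally symmetric convex body), then there are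
`c, T₀ > 0` with `D̃(T) ⊆ (1 + cT)·D(T)` for all `0 < T ≤ T₀`. -/
theorem feedback_reachable_subset_dilation {n m : ℕ}
    (A : Matrix (Fin n) (Fin n) ℝ) (B : Matrix (Fin n) (Fin m) ℝ)
    (C : Matrix (Fin m) (Fin n) ℝ)
    (U : Set (Fin m → ℝ)) (hU : IsSymConvexBody U) :
    ∃ c > (0:ℝ), ∃ T₀ > (0:ℝ), ∀ T : ℝ, 0 < T → T ≤ T₀ →
      reachable (A + B * C) B U T ⊆ (1 + c * T) • reachable A B U T := by
  obtain ⟨hUc, hUconv, hUint, hUsymm⟩ := hU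
  obtain ⟨r, hr, hrU⟩ := exists_closedBall_subset_of_neg_eq hUconv hUsymm hUint
  have hBU : IsCompact (B.mulVec '' U) := hUc.image (by fun_prop)
  obtain ⟨k, hk, hCx⟩ := exists_norm_mulVec_mildSolution_le (A + B * C) C hBU
  refine ⟨k / r, by positivity, 1, one_pos, fun T hT hT1 => ?_⟩
  rintro _ ⟨u, hu, huU, rfl⟩
  set f := fun s => B *ᵥ u s
  have hf : Measurable f := by fun_prop
  have hfK (s : ℝ) : f s ∈ B.mulVec '' U := ⟨u s, huU s, rfl⟩
  set x := mildSolution (A + B * C) f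
  have hx : Continuous x := continuous_mildSolution hBU hf hfK
  have hdecomp : mildSolution (A + B * C) f T =
      mildSolution A (fun σ => B *ᵥ (u σ + C *ᵥ x σ)) T := by
    rw [mildSolution_eq_mildSolution_add_mulVec A hBU hf hfK hT.le, add_sub_cancel_left]
    simp only [f, x, Matrix.mulVec_add, Matrix.mulVec_mulVec]
  change mildSolution (A + B * C) f T ∈ _
  rw [hdecomp]
  refine mildSolution_mem_smul_reachable ⟨u 0, huU 0⟩ (by positivity) hT.le (by fun_prop)
    fun σ hσ => add_mem_one_add_smul_of_norm_le hUconv hr.le hrU (by positivity) (huU σ) ?_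
  calc ‖C *ᵥ x σ‖ ≤ k * σ := hCx f hfK σ ⟨hσ.1, hσ.2.trans hT1⟩
    _ ≤ k * T := by gcongr; exact hσ.2
    _ = k / r * T * r := by field_simp
end
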